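/- Let Γ be a finite nonempty bichromatic graph that is locally like W(F4). Then the number of short vertices of Γ equals the number of long vertices, the total number of vertices of Γ is divisible by 8, and Γ has at least 24 vertices. -/

import Mathlib

/-!
A short vertex has 3 short and 6 long neighbours and a long vertex has 6 short ones, so
counting short–long edges gives #short = #long. The short vertices of W(B₃) are pairwise
adjacent, hence "equal or adjacent" is an equivalence relation on the short vertices of Γ whose
classes are 4-cliques: 4 ∣ #short and 8 ∣ #Γ. The short vertices of W(C₃) span no triangle, so
the 6 short neighbours of a long vertex meet each class at most twice; there are at least three
classes, and #Γ ≥ 24.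
-/

/-- The Weyl graph of type `Bₙ`: vertices `y_{i,j}`, `1 ≤ i,j ≤ n`; distinct vertices
`y_{i,j}`, `y_{k,l}` are adjacent iff `{i,j} ∩ {k,l} = ∅` or `(k,l) = (j,i)`. -/
def WB (n : ℕ) : SimpleGraph (Fin n × Fin n) where
  Adj p q :=
    p ≠ q ∧ (({p.1, p.2} : Set (Fin n)) ∩ {q.1, q.2} = ∅ ∨ (q.1 = p.2 ∧ q.2 = p.1))
  symm := by
    constructor
    rintro ⟨a, b⟩ ⟨c, d⟩ ⟨hne, h⟩
    refine ⟨hne.symm, ?_⟩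
    rcases h with h | ⟨h1, h2⟩
    · left; rw [Set.inter_comm] at h; exact h
    · right; exact ⟨h2.symm, h1.symm⟩
  loopless := by constructor; rintro ⟨a, b⟩ ⟨hne, _⟩; exact hne rfl

/-- The coloring of `W(Bₙ)`: `y_{i,i}` is short (`true`), `y_{i,j}` with `i ≠ j` is long. -/
def WBcolor (n : ℕ) (p : Fin n × Fin n) : Bool := decide (p.1 = p.2)

/-- The coloring of `W(Cₙ)`: obtained from `W(Bₙ)` by exchanging short and long vertices. -/
def WCcolor (n : ℕ) (p : Fin n × Fin n) : Bool := !(WBcolor n p)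

/-- Isomorphism of bichromatic graphs: a graph isomorphism preserving vertex types
(`true` = short, `false` = long). -/
def BIso {V : Type*} {W : Type*} (G : SimpleGraph V) (cG : V → Bool)
    (H : SimpleGraph W) (cH : W → Bool) : Prop :=
  ∃ e : G ≃g H, ∀ v : V, cH (e v) = cG v

/-- A bichromatic graph is locally like `W(F₄)` if the local graph at every short vertex
is isomorphic to `W(B₃)` and the local graph at every long vertex is isomorphic to `W(C₃)`. -/
def LocallyLikeWF4 {V : Type*} (G : SimpleGraph V) (c : V → Bool) : Prop :=
  ∀ v : V,
    (c v = true → BIso (G.induce (G.neighborSet v)) (fun x => c x.1) (WB 3) (WBcolor 3)) ∧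
    (c v = false → BIso (G.induce (G.neighborSet v)) (fun x => c x.1) (WB 3) (WCcolor 3))

open Finset

lemma WB_adj_iff {n : ℕ} (p q : Fin n × Fin n) :
    (WB n).Adj p q ↔ p ≠ q ∧
      ((p.1 ≠ q.1 ∧ p.1 ≠ q.2 ∧ p.2 ≠ q.1 ∧ p.2 ≠ q.2) ∨ (q.1 = p.2 ∧ q.2 = p.1)) := by
  simp only [WB, Set.eq_empty_iff_forall_notMem, Set.mem_inter_iff, Set.mem_insert_iff,
    Set.mem_singleton_iff, not_and, not_or]
  grind

instance {n : ℕ} : DecidableRel (WB n).Adj := fun p q => decidable_of_iff' _ (WB_adj_iff p q)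

lemma WB_three_adj_of_WBcolor : ∀ p q : Fin 3 × Fin 3,
    WBcolor 3 p = true → WBcolor 3 q = true → p ≠ q → (WB 3).Adj p q := by
  decide

lemma WB_three_not_triangle_of_WCcolor : ∀ p q r : Fin 3 × Fin 3,
    WCcolor 3 p = true → WCcolor 3 q = true → WCcolor 3 r = true →
    (WB 3).Adj p q → (WB 3).Adj p r → (WB 3).Adj q r → False := by
  decide

lemma BIso.card_color {V W : Type*} {G : SimpleGraph V} {cG : V → Bool}
    {H : SimpleGraph W} {cH : W → Bool} (h : BIso G cG H cH) (b : Bool) :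
    Nat.card {v // cG v = b} = Nat.card {w // cH w = b} := by
  obtain ⟨e, he⟩ := h
  exact Nat.card_congr (e.toEquiv.subtypeEquiv fun v => by simp [he])

lemma BIso.card_filter_adj_color {V W : Type*} {G : SimpleGraph V} {c : V → Bool}
    [Fintype V] [DecidableRel G.Adj] {v : V} {H : SimpleGraph W} {cH : W → Bool}
    (h : BIso (G.induce (G.neighborSet v)) (fun x => c x.1) H cH) (b : Bool) :
    #{w | G.Adj v w ∧ c w = b} = Nat.card {p // cH p = b} := by
  rw [← h.card_color, Nat.card_congr (Equiv.subtypeSubtypeEquivSubtypeInter _ (c · = b)),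
    Nat.card_eq_fintype_card, Fintype.card_subtype]
  rfl

namespace LocallyLikeWF4

variable {V : Type*} {G : SimpleGraph V} {c : V → Bool}

lemma adj_of_short_neighbors_of_short (hloc : LocallyLikeWF4 G c) {v x y : V} (hv : c v = true)
    (hx : G.Adj v x) (hy : G.Adj v y) (hcx : c x = true) (hcy : c y = true) (hxy : x ≠ y) :
    G.Adj x y := by
  obtain ⟨e, he⟩ := (hloc v).1 hv
  have hne : e ⟨x, hx⟩ ≠ e ⟨y, hy⟩ := e.injective.ne fun h => hxy congr($h.1)
  exact e.map_adj_iff.1 <|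
    WB_three_adj_of_WBcolor _ _ ((he _).trans hcx) ((he _).trans hcy) hne

lemma not_triangle_of_short_neighbors_of_long (hloc : LocallyLikeWF4 G c) {w x y z : V}
    (hw : c w = false) (hx : G.Adj w x) (hy : G.Adj w y) (hz : G.Adj w z)
    (hcx : c x = true) (hcy : c y = true) (hcz : c z = true)
    (hxy : G.Adj x y) (hxz : G.Adj x z) (hyz : G.Adj y z) : False := by
  obtain ⟨e, he⟩ := (hloc w).2 hw
  exact WB_three_not_triangle_of_WCcolor _ _ _ ((he ⟨x, hx⟩).trans hcx)
    ((he ⟨y, hy⟩).trans hcy) ((he ⟨z, hz⟩).trans hcz)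
    (e.map_adj_iff.2 hxy) (e.map_adj_iff.2 hxz) (e.map_adj_iff.2 hyz)

def shortSetoid (hloc : LocallyLikeWF4 G c) : Setoid V where
  r u v := u = v ∨ (G.Adj u v ∧ c u = true ∧ c v = true)
  iseqv := {
    refl := fun _ => .inl rfl
    symm := by
      rintro u v (rfl | ⟨h, hu, hv⟩)
      exacts [.inl rfl, .inr ⟨h.symm, hv, hu⟩]
    trans := by
      rintro u v w (rfl | ⟨huv, hu, hv⟩) (rfl | ⟨hvw, hv', hw⟩)
      · exact .inl rfl
      · exact .inr ⟨hvw, hv', hw⟩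
      · exact .inr ⟨huv, hu, hv⟩
      · by_cases huw : u = w
        · exact .inl huw
        · exact .inr ⟨adj_of_short_neighbors_of_short hloc hv huv.symm hvw hu hw huw, hu, hw⟩ }

lemma adj_of_mk_eq_mk (hloc : LocallyLikeWF4 G c) {u v : V}
    (h : Quotient.mk (shortSetoid hloc) u = ⟦v⟧) (huv : u ≠ v) : G.Adj u v :=
  ((Quotient.eq.1 h).resolve_left huv).1

variable [Fintype V] [DecidableRel G.Adj] {v : V}

lemma card_short_neighbors_of_short (hloc : LocallyLikeWF4 G c) (hv : c v = true) :
    #{w | G.Adj v w ∧ c w = true} = 3 := by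
  rw [((hloc v).1 hv).card_filter_adj_color, Nat.card_eq_fintype_card]; decide

lemma card_long_neighbors_of_short (hloc : LocallyLikeWF4 G c) (hv : c v = true) :
    #{w | G.Adj v w ∧ c w = false} = 6 := by
  rw [((hloc v).1 hv).card_filter_adj_color, Nat.card_eq_fintype_card]; decide

lemma card_short_neighbors_of_long (hloc : LocallyLikeWF4 G c) (hv : c v = false) :
    #{w | G.Adj v w ∧ c w = true} = 6 := by
  rw [((hloc v).2 hv).card_filter_adj_color, Nat.card_eq_fintype_card]; decide

lemma card_short_eq_card_long (hloc : LocallyLikeWF4 G c) :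
    #{v | c v = true} = #{v | c v = false} := by
  have hedges := card_mul_eq_card_mul G.Adj (m := 6) (n := 6)
    (s := {v | c v = true}) (t := {v | c v = false})
    (fun v hv => by
      rw [← card_long_neighbors_of_short hloc (mem_filter.1 hv).2, bipartiteAbove,
        filter_filter]
      simp only [and_comm])
    (fun w hw => by
      rw [← card_short_neighbors_of_long hloc (mem_filter.1 hw).2, bipartiteBelow,
        filter_filter]
      simp only [and_comm, G.adj_comm])
  omega

section Classes

variable (hloc : LocallyLikeWF4 G c) [DecidableEq (Quotient (shortSetoid hloc))]

lemma card_filter_short_mk_eq [DecidableEq V] (hv : c v = true) :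
    #{u | c u = true ∧ Quotient.mk (shortSetoid hloc) u = ⟦v⟧} = 4 := by
  have hfib : ({u | c u = true ∧ Quotient.mk (shortSetoid hloc) u = ⟦v⟧} : Finset V) =
      insert v ({w | G.Adj v w ∧ c w = true} : Finset V) := by
    ext u
    simp only [mem_filter, mem_univ, true_and, mem_insert, Quotient.eq]
    constructor
    · rintro ⟨hu, rfl | ⟨huv, -⟩⟩
      exacts [.inl rfl, .inr ⟨huv.symm, hu⟩]
    · rintro (rfl | ⟨hvu, hu⟩)
      exacts [⟨hv, .inl rfl⟩, ⟨hu, .inr ⟨hvu.symm, hu, hv⟩⟩]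
  rw [hfib, card_insert_of_notMem (by simp), card_short_neighbors_of_short hloc hv]

lemma card_short_eq_four_mul [DecidableEq V] :
    #{v | c v = true} =
      4 * #(({v | c v = true} : Finset V).image (Quotient.mk (shortSetoid hloc))) := by
  rw [card_eq_sum_card_image (Quotient.mk (shortSetoid hloc)), mul_comm]
  refine sum_const_nat fun q hq => ?_
  obtain ⟨v, hv, rfl⟩ := mem_image.1 hq
  rw [filter_filter, card_filter_short_mk_eq hloc (mem_filter.1 hv).2]

lemma card_short_neighbors_of_long_mk_eq_le_two {w : V} (hw : c w = false)
    (q : Quotient (shortSetoid hloc)) :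
    #{a ∈ ({a | G.Adj w a ∧ c a = true} : Finset V) |
      Quotient.mk (shortSetoid hloc) a = q} ≤ 2 := by
  by_contra! h
  obtain ⟨x, hx, y, hy, z, hz, hxy, hxz, hyz⟩ := two_lt_card.1 h
  simp only [mem_filter, mem_univ, true_and] at hx hy hz
  obtain ⟨⟨hwx, hcx⟩, rfl⟩ := hx
  obtain ⟨⟨hwy, hcy⟩, hyx⟩ := hy
  obtain ⟨⟨hwz, hcz⟩, hzx⟩ := hz
  exact not_triangle_of_short_neighbors_of_long hloc hw hwx hwy hwz hcx hcy hcz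
    (adj_of_mk_eq_mk hloc hyx.symm hxy) (adj_of_mk_eq_mk hloc hzx.symm hxz)
    (adj_of_mk_eq_mk hloc (hyx.trans hzx.symm) hyz)

lemma three_le_card_image_mk_short {w : V} (hw : c w = false) :
    3 ≤ #(({v | c v = true} : Finset V).image (Quotient.mk (shortSetoid hloc))) := by
  have hmaps : ∀ a ∈ ({a | G.Adj w a ∧ c a = true} : Finset V),
      Quotient.mk (shortSetoid hloc) a ∈
        ({v | c v = true} : Finset V).image (Quotient.mk (shortSetoid hloc)) :=
    fun a ha => mem_image_of_mem _ (by simpa using (mem_filter.1 ha).2.2)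
  have := card_le_mul_card_image_of_maps_to hmaps 2 fun q _ =>
    card_short_neighbors_of_long_mk_eq_le_two hloc hw q
  rw [card_short_neighbors_of_long hloc hw] at this
  omega

end Classes

end LocallyLikeWF4

theorem card_facts_of_locally_WF4 {V : Type} (G : SimpleGraph V) (c : V → Bool)
    (hfin : Finite V) (hne : Nonempty V) (hloc : LocallyLikeWF4 G c) :
    Nat.card {v : V // c v = true} = Nat.card {v : V // c v = false} ∧
    8 ∣ Nat.card V ∧ 24 ≤ Nat.card V := by
  classical
  have := Fintype.ofFinite V
  have hV : Fintype.card V = #{v | c v = true} + #{v | c v = false} := by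
    simpa using (card_filter_add_card_filter_not (s := univ) (c · = true)).symm
  have hSL := hloc.card_short_eq_card_long
  obtain ⟨w, hw⟩ : ∃ w, c w = false := by
    obtain ⟨w, hw⟩ := card_pos.1 (show 0 < #{v | c v = false} by
      have := Fintype.card_pos (α := V); omega)
    exact ⟨w, (mem_filter.1 hw).2⟩
  have h4 := hloc.card_short_eq_four_mul
  have h3 := hloc.three_le_card_image_mk_short hw
  simp only [Nat.card_eq_fintype_card, Fintype.card_subtype]
  omega
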